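/- arXiv:0802.2596 — 3 statements merged into one kernel-verified Lean document; each statement's English description precedes it below -/
import Mathlib

section
/- Consider a triangle in ℝ² with vertices A, B, C and opposite side lengths a, b, c respectively (so c = |AB|). If (a+b)/c ≤ 1 + ε for some ε ∈ [0, 0.5], then the distance from C to the segment AB is at most 1.5·ε^{1/4}·|AB|. -/
/-!
Take the point `P` of `AB` where the incircle of `ABC` touches it, i.e. `|AP| = (b + c - a)/2`.
Stewart's theorem gives `4c·|CP|² = (a + b - c)(c(a + b + c) - 2(b - a)²) ≤ c((a + b)² - c²)`,
so `|CP|² ≤ ((1 + ε)² - 1)c²/4 ≤ 0.625·ε·c²`, which is at most `(1.5·ε^{1/4}·c)²` because `ε ≤ 1`.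
-/

open Metric

section InnerProductSpace

variable {E : Type*} [NormedAddCommGroup E] [InnerProductSpace ℝ E]

theorem dist_sq_incircle_touch_point {A B C : E} (hAB : A ≠ B) {t : ℝ}
    (ht : t = (dist A C - dist B C + dist A B) / (2 * dist A B)) :
    dist C ((1 - t) • A + t • B) ^ 2 =
      (dist B C + dist A C - dist A B) *
        (dist A B * (dist B C + dist A C + dist A B) - 2 * (dist A C - dist B C) ^ 2) /
        (4 * dist A B) := by
  set a := dist B C
  set b := dist A C
  set c := dist A B
  have hc : 0 < c := dist_pos.mpr hAB
  have hCP : C - ((1 - t) • A + t • B) = (C - A) - t • (B - A) := by module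
  have hv : ‖C - A‖ = b := by rw [← dist_eq_norm, dist_comm]
  have hw : ‖B - A‖ = c := by rw [← dist_eq_norm, dist_comm]
  have hinner : inner ℝ (C - A) (B - A) = (b ^ 2 + c ^ 2 - a ^ 2) / 2 := by
    have hvw : ‖(C - A) - (B - A)‖ = a := by
      rw [sub_sub_sub_cancel_right, ← dist_eq_norm, dist_comm]
    have := norm_sub_sq_real (C - A) (B - A)
    rw [hv, hw, hvw] at this
    linarith
  rw [dist_eq_norm, hCP, norm_sub_sq_real, real_inner_smul_right, norm_smul,
    Real.norm_eq_abs, mul_pow, sq_abs, hv, hw, hinner]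
  subst ht
  field_simp
  ring

theorem exists_mem_segment_dist_sq_le {A B C : E} (hAB : A ≠ B) :
    ∃ P ∈ segment ℝ A B,
      dist C P ^ 2 ≤ ((dist B C + dist A C) ^ 2 - dist A B ^ 2) / 4 := by
  set a := dist B C
  set b := dist A C
  set c := dist A B
  have hc : 0 < c := dist_pos.mpr hAB
  have hab : c ≤ a + b := by linarith [dist_triangle A C B, dist_comm C B]
  have hb : b ≤ a + c := by linarith [dist_triangle A B C]
  have ha : a ≤ b + c := by linarith [dist_triangle B A C, dist_comm B A]
  set t := (b - a + c) / (2 * c)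
  have ht0 : 0 ≤ t := by positivity [show 0 ≤ b - a + c by linarith]
  have ht1 : t ≤ 1 := by rw [div_le_one (by positivity)]; linarith
  refine ⟨(1 - t) • A + t • B, ⟨1 - t, t, by linarith, ht0, by ring, rfl⟩, ?_⟩
  rw [dist_sq_incircle_touch_point hAB rfl, div_le_div_iff₀ (by positivity) (by norm_num)]
  have : 0 ≤ a + b - c := by linarith
  nlinarith [sq_nonneg (b - a)]

theorem infDist_segment_sq_le {A B C : E} (hAB : A ≠ B) :
    infDist C (segment ℝ A B) ^ 2 ≤ ((dist B C + dist A C) ^ 2 - dist A B ^ 2) / 4 := by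
  obtain ⟨P, hP, hCP⟩ := exists_mem_segment_dist_sq_le (C := C) hAB
  exact (pow_le_pow_left₀ infDist_nonneg (infDist_le_dist_of_mem hP) 2).trans hCP

end InnerProductSpace

theorem one_add_sq_sub_one_div_four_le {ε : ℝ} (hε0 : 0 ≤ ε) (hε1 : ε ≤ 1) :
    ((1 + ε) ^ 2 - 1) / 4 ≤ (1.5 * ε ^ ((1 : ℝ) / 4)) ^ 2 := by
  have hq : (ε ^ ((1 : ℝ) / 4)) ^ 2 = √ε := by
    rw [Real.sqrt_eq_rpow, ← Real.rpow_natCast, ← Real.rpow_mul hε0]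
    norm_num
  have hle : ε ≤ √ε := by
    have := Real.sq_sqrt hε0
    have : √ε ≤ 1 := Real.sqrt_le_one.mpr hε1
    nlinarith [Real.sqrt_nonneg ε]
  rw [mul_pow, hq]
  nlinarith

/-- In a thin triangle in `ℝ²` (`(a+b)/c ≤ 1+ε`), the distance from the apex `C`
to the segment `AB` is at most `1.5·ε^{1/4}·|AB|`. -/
theorem stmt_2 (A B C : EuclideanSpace ℝ (Fin 2)) (ε : ℝ)
    (hε : ε ∈ Set.Icc (0 : ℝ) 0.5)
    (hc : 0 < dist A B)
    (h : (dist B C + dist A C) / dist A B ≤ 1 + ε) :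
    Metric.infDist C (segment ℝ A B) ≤ 1.5 * ε ^ ((1 : ℝ) / 4) * dist A B := by
  obtain ⟨hε0, hε1⟩ := hε
  have hsum : dist B C + dist A C ≤ (1 + ε) * dist A B := (div_le_iff₀ hc).mp h
  have hsq : infDist C (segment ℝ A B) ^ 2 ≤ (1.5 * ε ^ ((1 : ℝ) / 4) * dist A B) ^ 2 :=
    calc infDist C (segment ℝ A B) ^ 2
        ≤ ((dist B C + dist A C) ^ 2 - dist A B ^ 2) / 4 :=
          infDist_segment_sq_le (dist_pos.mp hc)
      _ ≤ ((1 + ε) ^ 2 - 1) / 4 * dist A B ^ 2 := by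
          have : 0 ≤ dist B C + dist A C := by positivity
          nlinarith
      _ ≤ (1.5 * ε ^ ((1 : ℝ) / 4)) ^ 2 * dist A B ^ 2 := by
          gcongr
          exact one_add_sq_sub_one_div_four_le hε0 (by linarith)
      _ = (1.5 * ε ^ ((1 : ℝ) / 4) * dist A B) ^ 2 := by ring
  exact (pow_le_pow_iff_left₀ infDist_nonneg (by positivity) two_ne_zero).mp hsq
end

section
/- Let λ be a rectifiable curve in a metric space Y whose endpoints are L apart, and suppose λ is ε-efficient at scale ε^{1/4}/2 (i.e., Σ_j d(p_j, p_{j+1}) ≤ (1+ε)L for the subdivision {p_j} at spacing (ε^{1/4}/2)·L). Let {q_i} be any subdivision of λ with r_s ≤ d_Y(q_i, q_{i+1}) ≤ r_b for all i, where r_s, r_b ∈ [ε^{1/4}L, L]. Then the proportion of subsegments λ_{[q_i,q_{i+1}]} that fail to be ε^{1/2}-efficient at scale ε^{1/4}/2 is at most ε^{1/2}·(r_b/r_s). -/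
open scoped Classical

open Finset

/-!
A coarse subsegment that fails to be `√ε`-efficient has fine polygonal length exceeding its
chord by more than `√ε · r_s`, while by the triangle inequality the total excess over all
subsegments is at most `(1 + ε)L - L = εL`. Hence there are at most `√ε · L / r_s` bad
subsegments, and `L ≤ N · r_b` turns this into the proportion `√ε · r_b / r_s`.
-/

theorem card_filter_lt_mul_le_sum_sub {ι : Type*} (s : Finset ι) (d ℓ : ι → ℝ) {δ r : ℝ}
    (hδ : 0 ≤ δ) (hr : ∀ i ∈ s, r ≤ d i) (hdℓ : ∀ i ∈ s, d i ≤ ℓ i) :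
    (#(s.filter fun i => (1 + δ) * d i < ℓ i) : ℝ) * (δ * r) ≤ ∑ i ∈ s, (ℓ i - d i) := by
  set bad := s.filter fun i => (1 + δ) * d i < ℓ i
  have hbad : ∀ i ∈ bad, δ * r ≤ ℓ i - d i := by
    intro i hi
    obtain ⟨his, hlt⟩ := mem_filter.mp hi
    nlinarith [hr i his]
  calc (#bad : ℝ) * (δ * r) = #bad • (δ * r) := (nsmul_eq_mul _ _).symm
    _ ≤ ∑ i ∈ bad, (ℓ i - d i) := card_nsmul_le_sum bad _ _ hbad
    _ ≤ ∑ i ∈ s, (ℓ i - d i) :=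
      sum_le_sum_of_subset_of_nonneg (filter_subset _ s) fun i hi _ => sub_nonneg.mpr (hdℓ i hi)

theorem sum_sub_dist_le {Y : Type*} [PseudoMetricSpace Y] (q : ℕ → Y) (ℓ : ℕ → ℝ) (N : ℕ) :
    ∑ i ∈ range N, (ℓ i - dist (q i) (q (i + 1))) ≤ ∑ i ∈ range N, ℓ i - dist (q 0) (q N) := by
  rw [sum_sub_distrib]
  exact sub_le_sub_left (dist_le_range_sum_dist q N) _

theorem stmt_14_general {Y : Type*} [MetricSpace Y] (ε L rs rb : ℝ) (N : ℕ)
    (hε : 0 < ε) (hL : 0 < L)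
    (hrs : rs ∈ Set.Icc (ε ^ ((1 : ℝ) / 4) * L) L)
    (q : ℕ → Y) (hqL : dist (q 0) (q N) = L)
    (hspace : ∀ i < N, rs ≤ dist (q i) (q (i + 1)) ∧ dist (q i) (q (i + 1)) ≤ rb)
    (m : ℕ → ℕ) (c : ℕ → ℕ → Y)
    (hc0 : ∀ i < N, c i 0 = q i) (hclast : ∀ i < N, c i (m i) = q (i + 1))
    (heff : ∑ i ∈ Finset.range N, ∑ j ∈ Finset.range (m i), dist (c i j) (c i (j + 1))
        ≤ (1 + ε) * L) :
    (((Finset.range N).filter fun i =>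
        (1 + Real.sqrt ε) * dist (q i) (q (i + 1)) <
          ∑ j ∈ Finset.range (m i), dist (c i j) (c i (j + 1))).card : ℝ)
      ≤ Real.sqrt ε * (rb / rs) * N := by
  have hrs0 : 0 < rs := lt_of_lt_of_le (by positivity) hrs.1
  have hchord : ∀ i ∈ range N,
      dist (q i) (q (i + 1)) ≤ ∑ j ∈ range (m i), dist (c i j) (c i (j + 1)) := by
    intro i hi
    have hiN := mem_range.mp hi
    simpa only [hc0 i hiN, hclast i hiN] using dist_le_range_sum_dist (c i) (m i)
  have hcount := card_filter_lt_mul_le_sum_sub (range N) (fun i => dist (q i) (q (i + 1)))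
    (fun i => ∑ j ∈ range (m i), dist (c i j) (c i (j + 1))) (Real.sqrt_nonneg ε)
    (fun i hi => (hspace i (mem_range.mp hi)).1) hchord
  have hexcess := sum_sub_dist_le q (fun i => ∑ j ∈ range (m i), dist (c i j) (c i (j + 1))) N
  have hLN : L ≤ N * rb := calc
    L ≤ ∑ i ∈ range N, dist (q i) (q (i + 1)) := hqL ▸ dist_le_range_sum_dist q N
    _ ≤ #(range N) • rb := sum_le_card_nsmul _ _ _ fun i hi => (hspace i (mem_range.mp hi)).2
    _ = N * rb := by rw [card_range, nsmul_eq_mul]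
  set bad := (range N).filter fun i =>
    (1 + √ε) * dist (q i) (q (i + 1)) < ∑ j ∈ range (m i), dist (c i j) (c i (j + 1))
  have hbad : (#bad : ℝ) * (√ε * rs) ≤ √ε * (√ε * (N * rb)) := calc
    _ ≤ ∑ i ∈ range N, (∑ j ∈ range (m i), dist (c i j) (c i (j + 1)) - dist (q i) (q (i + 1))) :=
      hcount
    _ ≤ (1 + ε) * L - L := by linarith
    _ ≤ ε * (N * rb) := by linarith [mul_le_mul_of_nonneg_left hLN hε.le]
    _ = √ε * (√ε * (N * rb)) := by rw [← mul_assoc √ε, Real.mul_self_sqrt hε.le]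
  rw [show √ε * (rb / rs) * N = √ε * (N * rb) / rs by ring, le_div_iff₀ hrs0]
  exact le_of_mul_le_mul_left (by linarith) (Real.sqrt_pos.mpr hε)

/-- Most subsegments of an efficient curve are efficient: if the fine subdivision
of a curve with endpoints `L` apart is `ε`-efficient (`Σ ≤ (1+ε)L`), and `{q_i}` is
a coarse subdivision with gaps in `[r_s, r_b] ⊆ [ε^{1/4}L, L]`, then at most an
`ε^{1/2}·(r_b/r_s)` proportion of coarse subsegments fail to be `ε^{1/2}`-efficient. -/
theorem stmt_14 {Y : Type*} [MetricSpace Y] (ε L rs rb : ℝ) (N : ℕ)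
    (hε : 0 < ε) (hε1 : ε < 1) (hL : 0 < L) (hN : 0 < N)
    (hrs : rs ∈ Set.Icc (ε ^ ((1 : ℝ) / 4) * L) L)
    (hrb : rb ∈ Set.Icc (ε ^ ((1 : ℝ) / 4) * L) L)
    (hrsb : rs ≤ rb) (hsmall : Real.sqrt ε * (rb / rs) < 1)
    (q : ℕ → Y) (hqL : dist (q 0) (q N) = L)
    (hspace : ∀ i < N, rs ≤ dist (q i) (q (i + 1)) ∧ dist (q i) (q (i + 1)) ≤ rb)
    (m : ℕ → ℕ) (c : ℕ → ℕ → Y)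
    (hc0 : ∀ i < N, c i 0 = q i) (hclast : ∀ i < N, c i (m i) = q (i + 1))
    (heff : ∑ i ∈ Finset.range N, ∑ j ∈ Finset.range (m i), dist (c i j) (c i (j + 1))
        ≤ (1 + ε) * L) :
    (((Finset.range N).filter fun i =>
        (1 + Real.sqrt ε) * dist (q i) (q (i + 1)) <
          ∑ j ∈ Finset.range (m i), dist (c i j) (c i (j + 1))).card : ℝ)
      ≤ Real.sqrt ε * (rb / rs) * N :=
  stmt_14_general ε L rs rb N hε hL hrs q hqL hspace m c hc0 hclast heff
end

section
/- (Angle bound in a thin triangle.) In a triangle in ℝ² with vertices A, B, C and opposite side lengths a, b, c satisfying (a+b)/c ≤ 1 + ε for ε ∈ [0, 0.5], the smaller of the two base angles satisfies min{∠A, ∠B} ≤ max{ π − arccos(−1 + √(ε/(1+ε))), arcsin(√(ε/(1+ε))/2) }. -/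
/-!
If `|BC| ≤ |AC|`, the law of cosines gives `cos ∠A ≥ c / (a + b)`, since
`(a + b)(b² + c² - a²) - 2bc² = (b - a)((a + b)² - c²) ≥ 0`. The angle opposite the shorter
of the two legs is therefore at most `arccos (c / (a + b)) ≤ arccos (1 / (1 + ε))`, and
`1 / (1 + ε) = 1 - t ≥ 1 - √t` for `t = ε / (1 + ε) ∈ [0, 1)`, while
`π - arccos (-1 + √t) = arccos (1 - √t)`.
-/

open EuclideanGeometry Real

section Triangle

variable {V P : Type*} [NormedAddCommGroup V] [InnerProductSpace ℝ V] [MetricSpace P]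
  [NormedAddTorsor V P]

theorem EuclideanGeometry.dist_div_le_cos_angle {A B C : P} (h : dist B C ≤ dist A C) :
    dist A B / (dist B C + dist A C) ≤ cos (∠ B A C) := by
  rcases eq_or_ne A B with rfl | hAB
  · simp
  set a := dist B C
  set b := dist A C
  set c := dist A B
  have hc : 0 < c := dist_pos.2 hAB
  have hcab : c ≤ b + a := by simpa [dist_comm C B] using dist_triangle A C B
  have hb : 0 < b := by linarith
  have hlaw : a * a = c * c + b * b - 2 * c * b * cos (∠ B A C) := by
    simpa [dist_comm B A, dist_comm C A] using law_cos B A C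
  rw [div_le_iff₀ (by linarith)]
  have key : 2 * b * c ^ 2 ≤ (a + b) * (b ^ 2 + c ^ 2 - a ^ 2) := by
    nlinarith [mul_nonneg (sub_nonneg.2 h) (mul_nonneg (by linarith : 0 ≤ a + b + c)
      (sub_nonneg.2 hcab))]
  nlinarith [mul_pos hb hc]

theorem EuclideanGeometry.angle_le_arccos_dist_div {A B C : P} (h : dist B C ≤ dist A C) :
    ∠ B A C ≤ arccos (dist A B / (dist B C + dist A C)) := by
  rw [← arccos_cos (angle_nonneg B A C) (angle_le_pi B A C)]
  exact arccos_le_arccos (dist_div_le_cos_angle h)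

theorem EuclideanGeometry.min_angle_le_arccos_dist_div (A B C : P) :
    min (∠ B A C) (∠ A B C) ≤ arccos (dist A B / (dist B C + dist A C)) := by
  rcases le_total (dist B C) (dist A C) with h | h
  · exact min_le_of_left_le (angle_le_arccos_dist_div h)
  · refine min_le_of_right_le ?_
    simpa only [dist_comm B A, add_comm] using angle_le_arccos_dist_div h

end Triangle

theorem Real.arccos_inv_one_add_le {ε : ℝ} (hε : 0 ≤ ε) :
    arccos (1 / (1 + ε)) ≤ π - arccos (-1 + √(ε / (1 + ε))) := by
  have hsplit : 1 / (1 + ε) = 1 - ε / (1 + ε) := by field_simp; ring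
  set t := ε / (1 + ε)
  have ht : t ≤ 1 := div_le_one_of_le₀ (by linarith) (by linarith)
  rw [show -1 + √t = -(1 - √t) by ring, arccos_neg, sub_sub_cancel, hsplit]
  exact arccos_le_arccos (by linarith [le_sqrt_self_iff.2 ht])

/-- Angle bound in a thin triangle: if `(a+b)/c ≤ 1+ε` with `ε ∈ [0, 0.5]`, then
the smaller of the two base angles at `A` and `B` is at most
`max (π − arccos(−1 + √(ε/(1+ε)))) (arcsin(√(ε/(1+ε))/2))`. -/
theorem stmt_19 (A B C : EuclideanSpace ℝ (Fin 2)) (ε : ℝ)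
    (hε : ε ∈ Set.Icc (0 : ℝ) 0.5)
    (hc : 0 < dist A B)
    (h : (dist B C + dist A C) / dist A B ≤ 1 + ε) :
    min (∠ B A C) (∠ A B C) ≤
      max (Real.pi - Real.arccos (-1 + Real.sqrt (ε / (1 + ε))))
          (Real.arcsin (Real.sqrt (ε / (1 + ε)) / 2)) := by
  have hsum : 0 < (dist B C + dist A C) / dist A B :=
    div_pos (hc.trans_le ((dist_triangle_right A B C).trans_eq (add_comm _ _))) hc
  have hratio : 1 / (1 + ε) ≤ dist A B / (dist B C + dist A C) := by
    simpa only [one_div_div] using one_div_le_one_div_of_le hsum h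
  refine le_max_of_le_left ?_
  calc min (∠ B A C) (∠ A B C) ≤ arccos (dist A B / (dist B C + dist A C)) :=
        min_angle_le_arccos_dist_div A B C
    _ ≤ arccos (1 / (1 + ε)) := arccos_le_arccos hratio
    _ ≤ π - arccos (-1 + √(ε / (1 + ε))) := arccos_inv_one_add_le hε.1
end
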